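/- arXiv:2011.09401 — 5 statements merged into one kernel-verified Lean document; each statement's English description precedes it below -/
import Mathlib

section
/- Let n be a positive integer with n ≥ 9.8·10^18, and let P be the largest prime factor of n. If n/P ≤ √n (equivalently P ≥ √n), then the number of distinct prime factors of n satisfies ω(n) ≤ log n / log log n. -/
open Real

/-! Auxiliary combinatorial machinery: a lower bound on products of distinct primes. -/

/-- A lower bound for the `i`-th smallest member of any set of distinct primes. -/
private def bb (i : ℕ) : ℕ :=
  if i ≤ 11 then [1,2,3,5,7,11,13,17,19,23,29,31].getD i 1 else i + 25

/-- `Hf k` is a lower bound for the product of any `k` distinct primes. -/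
private def Hf : ℕ → ℕ
  | 0 => 1
  | k+1 => Hf k * bb (k+1)

private lemma bb_of_ge {i : ℕ} (h : 12 ≤ i) : bb i = i + 25 := by
  rw [bb, if_neg (by omega)]

private lemma bb_pos (i : ℕ) : 0 < bb i := by
  rw [bb]; split_ifs with h
  · interval_cases i <;> decide
  · omega

private lemma Hf_pos (k : ℕ) : 0 < Hf k := by
  induction k with
  | zero => decide
  | succ k ih => exact Nat.mul_pos ih (bb_pos (k+1))

private lemma max_ge_bb (S : Finset ℕ) (hS : ∀ p ∈ S, Nat.Prime p) (hne : S.Nonempty) :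
    bb S.card ≤ S.max' hne := by
  by_contra h
  push_neg at h
  have hsub : S ⊆ (Finset.range (bb S.card)).filter Nat.Prime := by
    intro p hp
    exact Finset.mem_filter.mpr ⟨Finset.mem_range.mpr (lt_of_le_of_lt (S.le_max' p hp) h),
      hS p hp⟩
  have hcard : S.card ≤ ((Finset.range (bb S.card)).filter Nat.Prime).card :=
    Finset.card_le_card hsub
  have h1 : 1 ≤ S.card := Finset.card_pos.mpr hne
  obtain ⟨c, hc⟩ : ∃ c, S.card = c := ⟨_, rfl⟩
  rw [hc] at hcard h1
  rcases le_or_gt c 11 with h11 | h12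
  · interval_cases c <;> revert hcard <;> decide
  · rw [bb_of_ge (by omega)] at hcard
    have hsub2 : ((Finset.range (c+25)).filter Nat.Prime) ⊆
        ((Finset.range 37).filter Nat.Prime) ∪ Finset.Ico 37 (c+25) := by
      intro p hp
      simp only [Finset.mem_filter, Finset.mem_range] at hp
      simp only [Finset.mem_union, Finset.mem_filter, Finset.mem_range, Finset.mem_Ico]
      rcases lt_or_ge p 37 with h37 | h37
      · exact Or.inl ⟨h37, hp.2⟩
      · exact Or.inr ⟨h37, hp.1⟩
    have hcard2 := Finset.card_le_card hsub2
    have hcard3 := Finset.card_union_le ((Finset.range 37).filter Nat.Prime)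
      (Finset.Ico 37 (c+25))
    have hval : ((Finset.range 37).filter Nat.Prime).card = 11 := by decide
    rw [hval, Nat.card_Ico] at hcard3
    omega

private lemma Hf_le_prod : ∀ (k : ℕ) (S : Finset ℕ), (∀ p ∈ S, Nat.Prime p) → S.card = k →
    Hf k ≤ ∏ p ∈ S, p := by
  intro k
  induction k with
  | zero =>
    intro S _ hc
    rw [Finset.card_eq_zero] at hc
    subst hc
    simp [Hf]
  | succ k ih =>
    intro S hS hc
    have hne : S.Nonempty := Finset.card_pos.mp (by omega)
    set M := S.max' hne with hM
    have hMS : M ∈ S := S.max'_mem hne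
    have hbM : bb (k+1) ≤ M := by
      have := max_ge_bb S hS hne
      rwa [hc] at this
    have herase : Hf k ≤ ∏ p ∈ S.erase M, p := by
      refine ih _ (fun p hp => hS p (Finset.mem_of_mem_erase hp)) ?_
      rw [Finset.card_erase_of_mem hMS, hc]
      omega
    calc Hf (k+1) = Hf k * bb (k+1) := rfl
      _ ≤ (∏ p ∈ S.erase M, p) * M := Nat.mul_le_mul herase hbM
      _ = ∏ p ∈ S, p := by
        rw [mul_comm]
        exact Finset.mul_prod_erase S (fun x => x) hMS

/-! Analytic helpers. -/

private lemma exp_nat_ub (m : ℕ) : Real.exp m ≤ 2.7182818286 ^ m := by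
  have h : Real.exp ((m:ℝ) * 1) = Real.exp 1 ^ m := Real.exp_nat_mul 1 m
  rw [mul_one] at h
  rw [h]
  exact pow_le_pow_left₀ (Real.exp_pos 1).le Real.exp_one_lt_d9.le m

private lemma exp_nat_lb (m : ℕ) : (2.7182818283:ℝ) ^ m ≤ Real.exp m := by
  have h : Real.exp ((m:ℝ) * 1) = Real.exp 1 ^ m := Real.exp_nat_mul 1 m
  rw [mul_one] at h
  rw [h]
  exact pow_le_pow_left₀ (by norm_num) Real.exp_one_gt_d9.le m

/-- The key monotonicity step: if `c * log X ≤ X` then `c * log L ≤ L` for any `L ≥ X ≥ c`. -/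
private lemma aux_mono {c X L : ℝ} (h0 : 0 < c) (h1 : c ≤ X) (h2 : X ≤ L)
    (h3 : c * Real.log X ≤ X) : c * Real.log L ≤ L := by
  have hX : 0 < X := h0.trans_le h1
  have hL : 0 < L := hX.trans_le h2
  have hlog : Real.log L - Real.log X ≤ L / X - 1 := by
    rw [← Real.log_div hL.ne' hX.ne']
    exact Real.log_le_sub_one_of_pos (by positivity)
  have h4 : c * (Real.log L - Real.log X) ≤ L - X := by
    have h5 : c * (Real.log L - Real.log X) ≤ c * (L/X - 1) :=
      mul_le_mul_of_nonneg_left hlog h0.le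
    have h6 : c * (L/X - 1) = (c/X) * (L - X) := by field_simp
    have h7 : c/X ≤ 1 := (div_le_one hX).mpr h1
    have h8 : (c/X)*(L-X) ≤ 1*(L-X) := mul_le_mul_of_nonneg_right h7 (by linarith)
    nlinarith
  rw [mul_sub] at h4
  linarith

private lemma cubic_exp {x : ℝ} (hx : (3/2:ℝ) ≤ x) : (8/3)*x ≤ Real.exp x := by
  have h0 : (0:ℝ) ≤ x := by linarith
  have h := Real.sum_le_exp_of_nonneg h0 4
  have hs : ∑ i ∈ Finset.range 4, x^i/(Nat.factorial i : ℝ) = 1 + x + x^2/2 + x^3/6 := by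
    simp [Finset.sum_range_succ, Nat.factorial]
    try ring
  rw [hs] at h
  nlinarith [sq_nonneg (x - 3/2), mul_nonneg (sub_nonneg.mpr hx) (sq_nonneg (x - 3/2))]

private lemma log14_ge : (5/2:ℝ) ≤ Real.log 14 := by
  rw [Real.le_log_iff_exp_le (by norm_num)]
  have h1 : Real.exp (5/2 : ℝ) = Real.exp 3 / Real.exp (1/2) := by
    rw [← Real.exp_sub]; norm_num
  have h2 : Real.exp (3:ℕ) ≤ 2.7182818286 ^ (3:ℕ) := exp_nat_ub 3
  have h2' : Real.exp (3:ℝ) ≤ 2.7182818286 ^ (3:ℕ) := by norm_num at h2 ⊢; exact h2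
  have h3 : (3/2:ℝ) ≤ Real.exp (1/2) := by
    have := Real.add_one_le_exp (1/2:ℝ); linarith
  rw [h1]
  have hpos : (0:ℝ) < Real.exp (1/2) := Real.exp_pos _
  calc Real.exp 3 / Real.exp (1/2) ≤ (2.7182818286 ^ (3:ℕ)) / (3/2) := by
        apply div_le_div₀ (by positivity) h2' (by norm_num) h3
    _ ≤ 14 := by norm_num

/-- `(8/5)(k+1)log(k+1) ≤ 2 log (Hf k)` for `k ≥ 13`. -/
private lemma tail_lb : ∀ k : ℕ, 13 ≤ k →
    (8/5:ℝ) * ((k:ℝ)+1) * Real.log ((k:ℝ)+1) ≤ 2 * Real.log (Hf k) := by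
  refine Nat.le_induction ?_ ?_
  · -- base case k = 13
    have hHf13 : (Hf 13 : ℝ) = 281988049122780 := by norm_num [Hf, bb]
    rw [hHf13]
    have hlog14 : Real.log ((13:ℝ)+1) ≤ 59/20 := by
      rw [show ((13:ℝ)+1) = 14 by norm_num, Real.log_le_iff_le_exp (by norm_num)]
      have h1 : Real.exp (59/20 : ℝ) = Real.exp 3 * Real.exp (-(1/20)) := by
        rw [← Real.exp_add]; norm_num
      have h2 : Real.exp (3:ℕ) ≥ (2.7182818283:ℝ) ^ (3:ℕ) := exp_nat_lb 3
      have h2' : (2.7182818283:ℝ) ^ (3:ℕ) ≤ Real.exp (3:ℝ) := by norm_num at h2 ⊢; exact h2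
      have h3 : (1 - 1/20 : ℝ) ≤ Real.exp (-(1/20)) := by
        have := Real.add_one_le_exp (-(1/20):ℝ); linarith
      rw [h1]
      calc (14:ℝ) ≤ (2.7182818283 ^ (3:ℕ)) * (1 - 1/20) := by norm_num
        _ ≤ Real.exp 3 * Real.exp (-(1/20)) :=
            mul_le_mul h2' h3 (by norm_num) (Real.exp_pos _).le
    have hlogH : (661/20:ℝ) ≤ Real.log 281988049122780 := by
      rw [Real.le_log_iff_exp_le (by norm_num)]
      have h1 : Real.exp (661/20 : ℝ) = Real.exp 33 * Real.exp (1/20) := by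
        rw [← Real.exp_add]; norm_num
      have h2 : Real.exp (33:ℕ) ≤ (2.7182818286:ℝ) ^ (33:ℕ) := exp_nat_ub 33
      have h2' : Real.exp (33:ℝ) ≤ (2.7182818286:ℝ) ^ (33:ℕ) := by norm_num at h2 ⊢; exact h2
      have h3 : Real.exp (1/20 : ℝ) ≤ 20/19 := by
        have h4 : (1 - 1/20 : ℝ) ≤ Real.exp (-(1/20)) := by
          have := Real.add_one_le_exp (-(1/20):ℝ); linarith
        have h5 : Real.exp (1/20 : ℝ) * Real.exp (-(1/20)) = 1 := by
          rw [← Real.exp_add]; norm_num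
        nlinarith [Real.exp_pos (1/20:ℝ), Real.exp_pos (-(1/20):ℝ)]
      rw [h1]
      calc Real.exp 33 * Real.exp (1/20) ≤ (2.7182818286 ^ (33:ℕ)) * (20/19) :=
            mul_le_mul h2' h3 (Real.exp_pos _).le (by positivity)
        _ ≤ 281988049122780 := by norm_num
    have hlog14' : (0:ℝ) ≤ Real.log ((13:ℝ)+1) := Real.log_nonneg (by norm_num)
    push_cast
    nlinarith
  · -- induction step
    intro k hk ih
    have hkR : (13:ℝ) ≤ (k:ℝ) := by exact_mod_cast hk
    have hH : (Hf (k+1) : ℝ) = (Hf k : ℝ) * ((k:ℝ)+26) := by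
      have h1 : Hf (k+1) = Hf k * bb (k+1) := rfl
      rw [h1, bb_of_ge (by omega)]
      push_cast
      ring
    have hHk : (0:ℝ) < (Hf k : ℝ) := by exact_mod_cast Hf_pos k
    rw [hH, Real.log_mul hHk.ne' (by positivity)]
    have hd : Real.log ((k:ℝ)+2) - Real.log ((k:ℝ)+1) ≤ 1/((k:ℝ)+1) := by
      rw [← Real.log_div (by positivity) (by positivity)]
      have h := Real.log_le_sub_one_of_pos (show (0:ℝ) < ((k:ℝ)+2)/((k:ℝ)+1) by positivity)
      have heq : ((k:ℝ)+2)/((k:ℝ)+1) - 1 = 1/((k:ℝ)+1) := by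
        field_simp
        norm_num
      linarith
    have hsplit : (8/5:ℝ)*(Real.log ((k:ℝ)+2) + 1) ≤ 2*Real.log ((k:ℝ)+26) := by
      rcases le_or_gt k 53 with h53 | h53
      · have h53R : (k:ℝ) ≤ 53 := by exact_mod_cast h53
        have hr : Real.log (79/55 : ℝ) ≤ Real.log ((k:ℝ)+26) - Real.log ((k:ℝ)+2) := by
          rw [← Real.log_div (by positivity) (by positivity)]
          apply Real.log_le_log (by norm_num)
          rw [le_div_iff₀ (by positivity)]
          nlinarith
        have hr2 : (13/50:ℝ) ≤ Real.log (79/55 : ℝ) := by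
          rw [Real.le_log_iff_exp_le (by norm_num)]
          have h4 : (1 - 13/50 : ℝ) ≤ Real.exp (-(13/50)) := by
            have := Real.add_one_le_exp (-(13/50):ℝ); linarith
          have h5 : Real.exp (13/50 : ℝ) * Real.exp (-(13/50)) = 1 := by
            rw [← Real.exp_add]; norm_num
          nlinarith [Real.exp_pos (13/50:ℝ), Real.exp_pos (-(13/50):ℝ)]
        have hl15 : (27/10:ℝ) ≤ Real.log ((k:ℝ)+2) := by
          rw [Real.le_log_iff_exp_le (by positivity)]
          have h1 : Real.exp (27/10 : ℝ) = Real.exp 3 / Real.exp (3/10) := by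
            rw [← Real.exp_sub]; norm_num
          have h2 : Real.exp (3:ℕ) ≤ (2.7182818286:ℝ) ^ (3:ℕ) := exp_nat_ub 3
          have h2' : Real.exp (3:ℝ) ≤ (2.7182818286:ℝ) ^ (3:ℕ) := by
            norm_num at h2 ⊢; exact h2
          have h3 : ((51/50:ℝ)) ^ (15:ℕ) ≤ Real.exp (3/10) := by
            have h6 : ((51/50:ℝ)) ≤ Real.exp (1/50) := by
              have := Real.add_one_le_exp (1/50:ℝ); linarith
            have h7 : ((51/50:ℝ)) ^ (15:ℕ) ≤ (Real.exp (1/50)) ^ (15:ℕ) :=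
              pow_le_pow_left₀ (by norm_num) h6 15
            have h8 : (Real.exp (1/50:ℝ)) ^ (15:ℕ) = Real.exp ((15:ℕ) * (1/50)) := by
              rw [Real.exp_nat_mul]
            rw [h8] at h7
            norm_num at h7 ⊢
            exact h7
          rw [h1]
          calc Real.exp 3 / Real.exp (3/10) ≤ (2.7182818286 ^ (3:ℕ)) / ((51/50:ℝ) ^ (15:ℕ)) :=
                div_le_div₀ (by positivity) h2' (by positivity) h3
            _ ≤ 15 := by norm_num
            _ ≤ (k:ℝ)+2 := by linarith
        linarith
      · have h55 : (55:ℝ) ≤ (k:ℝ)+2 := by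
          have : (54:ℝ) ≤ (k:ℝ) := by exact_mod_cast h53
          linarith
        have hl4 : (4:ℝ) ≤ Real.log ((k:ℝ)+2) := by
          rw [Real.le_log_iff_exp_le (by positivity)]
          have h2 : Real.exp (4:ℕ) ≤ (2.7182818286:ℝ) ^ (4:ℕ) := exp_nat_ub 4
          have h2' : Real.exp (4:ℝ) ≤ (2.7182818286:ℝ) ^ (4:ℕ) := by
            norm_num at h2 ⊢; exact h2
          calc Real.exp (4:ℝ) ≤ (2.7182818286:ℝ) ^ (4:ℕ) := h2'
            _ ≤ 55 := by norm_num
            _ ≤ (k:ℝ)+2 := h55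
        have hmono : Real.log ((k:ℝ)+2) ≤ Real.log ((k:ℝ)+26) :=
          Real.log_le_log (by positivity) (by linarith)
        linarith
    have hmul : ((k:ℝ)+1) * (Real.log ((k:ℝ)+2) - Real.log ((k:ℝ)+1)) ≤ 1 := by
      have h1 : ((k:ℝ)+1) * (Real.log ((k:ℝ)+2) - Real.log ((k:ℝ)+1)) ≤
          ((k:ℝ)+1) * (1/((k:ℝ)+1)) := mul_le_mul_of_nonneg_left hd (by positivity)
      have h2 : ((k:ℝ)+1) * (1/((k:ℝ)+1)) = 1 := by field_simp
      linarith
    push_cast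
    rw [show ((k:ℝ)+1+1) = (k:ℝ)+2 from by ring]
    nlinarith

private lemma sqcond {k : ℕ} (hk : 13 ≤ k) :
    ((k:ℝ)+1) * Real.log ((8/5)*((k:ℝ)+1)*Real.log ((k:ℝ)+1)) ≤
      (8/5)*((k:ℝ)+1)*Real.log ((k:ℝ)+1) := by
  have hkR : (13:ℝ) ≤ (k:ℝ) := by exact_mod_cast hk
  have h14 : (14:ℝ) ≤ (k:ℝ)+1 := by linarith
  have hu : (5/2:ℝ) ≤ Real.log ((k:ℝ)+1) :=
    le_trans log14_ge (Real.log_le_log (by norm_num) h14)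
  set u := Real.log ((k:ℝ)+1) with hu_def
  have hupos : (0:ℝ) < u := by linarith
  have hXpos : (0:ℝ) < (8/5)*((k:ℝ)+1)*u := by positivity
  have hexpu : Real.exp u = (k:ℝ)+1 := Real.exp_log (by linarith)
  have hcube : (8/5)*u ≤ Real.exp ((3/5)*u) := by
    have h := cubic_exp (x := (3/5)*u) (by linarith)
    linarith
  have hlogX : Real.log ((8/5)*((k:ℝ)+1)*u) ≤ (8/5)*u := by
    rw [Real.log_le_iff_le_exp hXpos]
    have h1 : Real.exp ((8/5)*u) = Real.exp u * Real.exp ((3/5)*u) := by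
      rw [← Real.exp_add]; ring_nf
    rw [h1, hexpu]
    have h2 := mul_le_mul_of_nonneg_left hcube (show (0:ℝ) ≤ (k:ℝ)+1 by linarith)
    nlinarith
  calc ((k:ℝ)+1) * Real.log ((8/5)*((k:ℝ)+1)*u) ≤ ((k:ℝ)+1) * ((8/5)*u) :=
        mul_le_mul_of_nonneg_left hlogX (by linarith)
    _ = (8/5)*((k:ℝ)+1)*u := by ring

/-- If `n ≥ 9.8·10^18` is a positive integer whose largest prime factor `P`
satisfies `n / P ≤ √n`, then `ω(n) ≤ log n / log log n`. -/
theorem omega_le_of_large_prime_factor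
    (n : ℕ) (hn : (n : ℝ) ≥ 9.8e18)
    (P : ℕ) (hP : P.Prime) (hPdvd : P ∣ n)
    (hPmax : ∀ q : ℕ, q.Prime → q ∣ n → q ≤ P)
    (hfac : (n : ℝ) / P ≤ Real.sqrt n) :
    (n.primeFactors.card : ℝ) ≤ Real.log n / Real.log (Real.log n) := by
  have hn2 : (0:ℝ) < (n:ℝ) := lt_of_lt_of_le (by norm_num) hn
  have hn0 : 0 < n := by exact_mod_cast hn2
  have hPn : P ∈ n.primeFactors := Nat.mem_primeFactors.mpr ⟨hP, hPdvd, hn0.ne'⟩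
  set S := n.primeFactors.erase P with hS_def
  obtain ⟨k, hk_def⟩ : ∃ k, S.card = k := ⟨_, rfl⟩
  have hScard : k + 1 = n.primeFactors.card := by
    have h1 : S.card = n.primeFactors.card - 1 := Finset.card_erase_of_mem hPn
    rw [hk_def] at h1
    have h2 : 0 < n.primeFactors.card := Finset.card_pos.mpr ⟨P, hPn⟩
    omega
  have hSprime : ∀ p ∈ S, Nat.Prime p := fun p hp =>
    Nat.prime_of_mem_primeFactors (Finset.mem_of_mem_erase hp)
  have hSdvd : ∀ p ∈ S, p ∣ n / P := by
    intro p hp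
    have hpP : p ≠ P := Finset.ne_of_mem_erase hp
    have hpn : p ∣ n := Nat.dvd_of_mem_primeFactors (Finset.mem_of_mem_erase hp)
    have hcop : Nat.Coprime p P := (Nat.coprime_primes (hSprime p hp) hP).mpr hpP
    have hn_eq : n = P * (n / P) := (Nat.mul_div_cancel' hPdvd).symm
    have hd : p ∣ P * (n / P) := hn_eq ▸ hpn
    exact Nat.Coprime.dvd_of_dvd_mul_left hcop hd
  have hprod_dvd : (∏ p ∈ S, p) ∣ n / P :=
    Finset.prod_primes_dvd _ (fun p hp => Nat.Prime.prime (hSprime p hp)) hSdvd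
  have hq0 : 0 < n / P := Nat.div_pos (Nat.le_of_dvd hn0 hPdvd) hP.pos
  have hprod_le : (∏ p ∈ S, p) ≤ n / P := Nat.le_of_dvd hq0 hprod_dvd
  have hHf_le : (Hf k : ℝ) ≤ Real.sqrt n := by
    have h1 : Hf k ≤ ∏ p ∈ S, p := Hf_le_prod k S hSprime hk_def
    have h2 : (Hf k : ℝ) ≤ ((n / P : ℕ) : ℝ) := by exact_mod_cast le_trans h1 hprod_le
    have h3 : ((n / P : ℕ) : ℝ) ≤ (n:ℝ) / (P:ℝ) := Nat.cast_div_le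
    linarith
  have hHfpos : (0:ℝ) < (Hf k : ℝ) := by exact_mod_cast Hf_pos k
  have hlogH : 2 * Real.log (Hf k) ≤ Real.log n := by
    have h1 : Real.log (Hf k) ≤ Real.log (Real.sqrt n) := Real.log_le_log hHfpos hHf_le
    rw [Real.log_sqrt (by positivity)] at h1
    linarith
  have hL43 : (437/10 : ℝ) ≤ Real.log n := by
    rw [Real.le_log_iff_exp_le hn2]
    have h1 : Real.exp (437/10 : ℝ) = Real.exp 44 / Real.exp (3/10) := by
      rw [← Real.exp_sub]; norm_num
    have h2 : Real.exp (44:ℕ) ≤ (2.7182818286:ℝ) ^ (44:ℕ) := exp_nat_ub 44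
    have h2' : Real.exp (44:ℝ) ≤ (2.7182818286:ℝ) ^ (44:ℕ) := by norm_num at h2 ⊢; exact h2
    have h3 : ((23/20:ℝ))^(2:ℕ) ≤ Real.exp (3/10:ℝ) := by
      have h6 : ((23/20:ℝ)) ≤ Real.exp (3/20) := by
        have := Real.add_one_le_exp (3/20:ℝ); linarith
      have h7 := pow_le_pow_left₀ (show (0:ℝ) ≤ 23/20 by norm_num) h6 2
      have h8 : (Real.exp (3/20:ℝ)) ^ (2:ℕ) = Real.exp ((2:ℕ) * (3/20)) := by
        rw [Real.exp_nat_mul]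
      rw [h8] at h7
      norm_num at h7 ⊢
      exact h7
    rw [h1]
    calc Real.exp 44 / Real.exp (3/10) ≤ ((2.7182818286:ℝ)^(44:ℕ)) / ((23/20:ℝ)^(2:ℕ)) :=
          div_le_div₀ (by positivity) h2' (by positivity) h3
      _ ≤ 9.8e18 := by norm_num
      _ ≤ (n:ℝ) := hn
  have hlogn_pos : (0:ℝ) < Real.log n := by linarith
  have hloglog_pos : (0:ℝ) < Real.log (Real.log n) := Real.log_pos (by linarith)
  rw [le_div_iff₀ hloglog_pos]
  have hcard_eq : (n.primeFactors.card : ℝ) = (k:ℝ) + 1 := by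
    rw [← hScard]; push_cast; ring
  rw [hcard_eq]
  have hcpos : (0:ℝ) < (k:ℝ)+1 := by positivity
  rcases le_or_gt k 10 with h10 | h10
  · -- case k ≤ 10 : take X = 43.7
    have hk10 : (k:ℝ) ≤ 10 := by exact_mod_cast h10
    apply aux_mono hcpos (by linarith) hL43
    have hlogX : Real.log (437/10 : ℝ) ≤ 39727/10000 := by
      rw [Real.log_le_iff_le_exp (by norm_num)]
      have h1 : Real.exp (39727/10000 : ℝ) = Real.exp 4 * Real.exp (-(273/10000)) := by
        rw [← Real.exp_add]; norm_num
      have h2 : (2.7182818283:ℝ)^(4:ℕ) ≤ Real.exp (4:ℝ) := by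
        have h := exp_nat_lb 4; norm_num at h ⊢; exact h
      have h3 : (1 - 273/10000 : ℝ) ≤ Real.exp (-(273/10000)) := by
        have := Real.add_one_le_exp (-(273/10000):ℝ); linarith
      rw [h1]
      calc (437/10:ℝ) ≤ (2.7182818283:ℝ)^(4:ℕ) * (1 - 273/10000) := by norm_num
        _ ≤ Real.exp 4 * Real.exp (-(273/10000)) :=
            mul_le_mul h2 h3 (by norm_num) (Real.exp_pos _).le
    have hlogX0 : (0:ℝ) ≤ Real.log (437/10 : ℝ) := Real.log_nonneg (by norm_num)
    calc ((k:ℝ)+1) * Real.log (437/10:ℝ) ≤ 11 * Real.log (437/10:ℝ) := by nlinarith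
      _ ≤ 11 * (39727/10000) := by linarith
      _ ≤ 437/10 := by norm_num
  · by_cases h11 : k = 11
    · -- case k = 11 : take X = 52
      subst h11
      have hHf11 : (Hf 11 : ℝ) = 200560490130 := by norm_num [Hf, bb]
      have h52 : (52:ℝ) ≤ Real.log n := by
        have h26 : (26:ℝ) ≤ Real.log (Hf 11 : ℝ) := by
          rw [hHf11, Real.le_log_iff_exp_le (by norm_num)]
          have h2 : Real.exp (26:ℕ) ≤ (2.7182818286:ℝ) ^ (26:ℕ) := exp_nat_ub 26
          have h2' : Real.exp (26:ℝ) ≤ (2.7182818286:ℝ) ^ (26:ℕ) := by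
            norm_num at h2 ⊢; exact h2
          calc Real.exp (26:ℝ) ≤ (2.7182818286:ℝ) ^ (26:ℕ) := h2'
            _ ≤ 200560490130 := by norm_num
        linarith
      apply aux_mono hcpos (by push_cast; norm_num) h52
      have hlogX : Real.log (52:ℝ) ≤ 13/3 := by
        rw [Real.log_le_iff_le_exp (by norm_num)]
        have h1 : Real.exp (13/3 : ℝ) = Real.exp 4 * Real.exp (1/3) := by
          rw [← Real.exp_add]; norm_num
        have h2 : (2.7182818283:ℝ)^(4:ℕ) ≤ Real.exp (4:ℝ) := by
          have h := exp_nat_lb 4; norm_num at h ⊢; exact h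
        have h3 : (1 + 1/3 : ℝ) ≤ Real.exp (1/3) := by
          have := Real.add_one_le_exp (1/3:ℝ); linarith
        rw [h1]
        calc (52:ℝ) ≤ (2.7182818283:ℝ)^(4:ℕ) * (1 + 1/3) := by norm_num
          _ ≤ Real.exp 4 * Real.exp (1/3) :=
              mul_le_mul h2 h3 (by norm_num) (Real.exp_pos _).le
      push_cast
      nlinarith [hlogX]
    · by_cases h12 : k = 12
      · -- case k = 12 : take X = 58
        subst h12
        have hHf12 : (Hf 12 : ℝ) = 7420738134810 := by norm_num [Hf, bb]
        have h58 : (58:ℝ) ≤ Real.log n := by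
          have h29 : (29:ℝ) ≤ Real.log (Hf 12 : ℝ) := by
            rw [hHf12, Real.le_log_iff_exp_le (by norm_num)]
            have h2 : Real.exp (29:ℕ) ≤ (2.7182818286:ℝ) ^ (29:ℕ) := exp_nat_ub 29
            have h2' : Real.exp (29:ℝ) ≤ (2.7182818286:ℝ) ^ (29:ℕ) := by
              norm_num at h2 ⊢; exact h2
            calc Real.exp (29:ℝ) ≤ (2.7182818286:ℝ) ^ (29:ℕ) := h2'
              _ ≤ 7420738134810 := by norm_num
          linarith
        apply aux_mono hcpos (by push_cast; norm_num) h58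
        have hlogX : Real.log (58:ℝ) ≤ 58/13 := by
          rw [Real.log_le_iff_le_exp (by norm_num)]
          have h1 : Real.exp (58/13 : ℝ) = Real.exp 4 * Real.exp (6/13) := by
            rw [← Real.exp_add]; norm_num
          have h2 : (2.7182818283:ℝ)^(4:ℕ) ≤ Real.exp (4:ℝ) := by
            have h := exp_nat_lb 4; norm_num at h ⊢; exact h
          have h3 : (1 + 6/13 : ℝ) ≤ Real.exp (6/13) := by
            have := Real.add_one_le_exp (6/13:ℝ); linarith
          rw [h1]
          calc (58:ℝ) ≤ (2.7182818283:ℝ)^(4:ℕ) * (1 + 6/13) := by norm_num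
            _ ≤ Real.exp 4 * Real.exp (6/13) :=
                mul_le_mul h2 h3 (by norm_num) (Real.exp_pos _).le
        push_cast
        nlinarith [hlogX]
      · -- case k ≥ 13
        have hk13 : 13 ≤ k := by omega
        have hkR : (13:ℝ) ≤ (k:ℝ) := by exact_mod_cast hk13
        have h14 : (14:ℝ) ≤ (k:ℝ)+1 := by linarith
        have hu : (5/2:ℝ) ≤ Real.log ((k:ℝ)+1) :=
          le_trans log14_ge (Real.log_le_log (by norm_num) h14)
        have h1 : (k:ℝ)+1 ≤ (8/5)*((k:ℝ)+1)*Real.log ((k:ℝ)+1) := by nlinarith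
        have h2 : (8/5)*((k:ℝ)+1)*Real.log ((k:ℝ)+1) ≤ Real.log n :=
          le_trans (tail_lb k hk13) hlogH
        exact aux_mono hcpos h1 h2 (sqcond hk13)
end

section
/- Let n be a positive integer whose largest prime factor P satisfies P > 2√n. Then every positive divisor e of n satisfies either e < √n / 2 or e > 2√n. -/
open Real

/-- If the largest prime factor `P` of a positive integer `n` satisfies `P > 2√n`,
then every positive divisor `e` of `n` satisfies `e < √n / 2` or `e > 2√n`. -/
theorem divisor_dichotomy_of_large_prime_factor
    (n : ℕ) (hn : 0 < n)
    (P : ℕ) (hP : P.Prime) (hPdvd : P ∣ n)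
    (hPmax : ∀ q : ℕ, q.Prime → q ∣ n → q ≤ P)
    (hPbig : (P : ℝ) > 2 * Real.sqrt n) :
    ∀ e : ℕ, e ∣ n → 0 < e →
      (e : ℝ) < Real.sqrt n / 2 ∨ (e : ℝ) > 2 * Real.sqrt n := by
  intro e hdvd hpos
  have hs : Real.sqrt n > 0 := Real.sqrt_pos.mpr (by exact_mod_cast hn)
  have hsq : Real.sqrt n * Real.sqrt n = (n : ℝ) :=
    Real.mul_self_sqrt (by positivity)
  by_cases hPe : P ∣ e
  · right
    have : (P : ℝ) ≤ (e : ℝ) := by exact_mod_cast Nat.le_of_dvd hpos hPe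
    linarith
  · left
    have hcop : Nat.Coprime e P :=
      ((Nat.Prime.coprime_iff_not_dvd hP).mpr hPe).symm
    have hmul : e * P ∣ n := Nat.Coprime.mul_dvd_of_dvd_of_dvd hcop hdvd hPdvd
    have hle : (e : ℝ) * (P : ℝ) ≤ (n : ℝ) := by
      exact_mod_cast Nat.le_of_dvd hn hmul
    have hepos : (0:ℝ) < e := by exact_mod_cast hpos
    nlinarith [mul_lt_mul_of_pos_left hPbig hepos]
end

section
/- Let a, b be integers with 0 ≤ b ≤ a and let n = 4a² − b² > 0. Then (2a − b) divides n and √n / 2 ≤ 2a − b ≤ 2√(n/3). In particular, n has a divisor e with √n / 2 ≤ e ≤ 2√(n/3) < 2√n. -/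
open Real

/-- Let `a, b` be integers with `0 ≤ b ≤ a` and `n = 4a² − b² > 0`. Then `2a − b`
divides `n` and `√n / 2 ≤ 2a − b ≤ 2√(n/3)`; in particular `n` has a divisor
between `√n / 2` and `2√(n/3) < 2√n`. -/
theorem divisor_from_ambiguous_form
    (a b n : ℤ) (hb0 : 0 ≤ b) (hba : b ≤ a)
    (hn : n = 4 * a ^ 2 - b ^ 2) (hnpos : 0 < n) :
    (2 * a - b) ∣ n ∧
    Real.sqrt n / 2 ≤ ((2 * a - b : ℤ) : ℝ) ∧
    ((2 * a - b : ℤ) : ℝ) ≤ 2 * Real.sqrt ((n : ℝ) / 3) ∧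
    2 * Real.sqrt ((n : ℝ) / 3) < 2 * Real.sqrt n := by
  have hfac : n = (2 * a - b) * (2 * a + b) := by ring_nf; linarith [hn]
  have hsum : (0:ℤ) ≤ 2 * a + b := by linarith
  have hepos : 0 < 2 * a - b := by
    by_contra h
    push_neg at h
    nlinarith
  have hnR : (0:ℝ) < (n:ℝ) := by exact_mod_cast hnpos
  have hbR : (0:ℝ) ≤ (b:ℝ) := by exact_mod_cast hb0
  have hbaR : (b:ℝ) ≤ (a:ℝ) := by exact_mod_cast hba
  have hnRe : (n:ℝ) = 4 * (a:ℝ) ^ 2 - (b:ℝ) ^ 2 := by exact_mod_cast (by exact_mod_cast hn : (n:ℝ) = ((4 * a ^ 2 - b ^ 2 : ℤ):ℝ))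
  have heRpos : (0:ℝ) < 2 * (a:ℝ) - (b:ℝ) := by exact_mod_cast hepos
  refine ⟨⟨2 * a + b, hfac⟩, ?_, ?_, ?_⟩
  · rw [div_le_iff₀ (by norm_num : (0:ℝ) < 2)]
    have h1 : (n:ℝ) ≤ (((2 * a - b:ℤ):ℝ) * 2) ^ 2 := by
      push_cast
      nlinarith [mul_nonneg (le_of_lt heRpos) (by linarith : (0:ℝ) ≤ 6*(a:ℝ) - 5*(b:ℝ))]
    calc Real.sqrt n ≤ Real.sqrt ((((2 * a - b:ℤ):ℝ) * 2) ^ 2) := Real.sqrt_le_sqrt h1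
      _ = ((2 * a - b:ℤ):ℝ) * 2 := Real.sqrt_sq (by positivity)
  · have heR : (0:ℝ) ≤ ((2 * a - b:ℤ):ℝ) := by exact_mod_cast hepos.le
    rw [show (2:ℝ) * Real.sqrt ((n:ℝ)/3) = Real.sqrt (4 * ((n:ℝ)/3)) by
      rw [show (4:ℝ) * ((n:ℝ)/3) = 2^2 * ((n:ℝ)/3) by ring, Real.sqrt_mul (by positivity),
        Real.sqrt_sq (by norm_num)]]
    rw [show ((2 * a - b:ℤ):ℝ) = Real.sqrt (((2 * a - b:ℤ):ℝ)^2) from (Real.sqrt_sq heR).symm]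
    apply Real.sqrt_le_sqrt
    have : 3 * ((2 * a - b:ℤ):ℝ)^2 ≤ 4 * (n:ℝ) := by push_cast; nlinarith [mul_nonneg (le_of_lt heRpos) (by linarith : (0:ℝ) ≤ 2*(a:ℝ) + 7*(b:ℝ))]
    linarith
  · have := Real.sqrt_lt_sqrt (by positivity : (0:ℝ) ≤ (n:ℝ)/3) (by linarith : (n:ℝ)/3 < n)
    linarith
end

section
/- Let n be a positive integer whose largest prime factor P satisfies P > 2√n. Then there are no integers a, b with 0 ≤ b ≤ a and n = 4a² − b². (Consequently, a fundamental discriminant d < 0 whose largest prime factor exceeds 2√|d| admits no reduced binary quadratic form of the shape (a, b, a).) -/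
open Real

/-- If the largest prime factor `P` of a positive integer `n` satisfies `P > 2√n`,
then there are no integers `a, b` with `0 ≤ b ≤ a` and `n = 4a² − b²`; i.e. `n`
is not represented as `|disc|` of a reduced binary quadratic form `(a, b, a)`. -/
theorem no_form_abba_of_large_prime_factor
    (n : ℕ) (hn : 0 < n)
    (P : ℕ) (hP : P.Prime) (hPdvd : P ∣ n)
    (hPmax : ∀ q : ℕ, q.Prime → q ∣ n → q ≤ P)
    (hPbig : (P : ℝ) > 2 * Real.sqrt n) :
    ¬ ∃ a b : ℤ, 0 ≤ b ∧ b ≤ a ∧ (n : ℤ) = 4 * a ^ 2 - b ^ 2 := by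
  rintro ⟨a, b, hb0, hba, heq⟩
  have hfac : (n : ℤ) = (2 * a - b) * (2 * a + b) := by ring_nf; linarith [heq]
  have hsum_pos : 0 < 2 * a + b := by
    by_contra h
    push_neg at h
    have ha0 : a = 0 := le_antisymm (by linarith) (le_trans hb0 hba)
    have hb0' : b = 0 := le_antisymm (by linarith [ha0]) hb0
    rw [ha0, hb0'] at heq
    simp at heq
    omega
  have hdiff_pos : 0 < 2 * a - b := by
    rcases lt_or_ge 0 (2 * a - b) with h | h
    · exact h
    · exfalso
      have : (n : ℤ) ≤ 0 := by
        rw [hfac]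
        exact mul_nonpos_of_nonpos_of_nonneg h hsum_pos.le
      omega
  -- P divides one factor, so P ≤ 2a + b
  have hPdvdZ : (P : ℤ) ∣ (2 * a - b) * (2 * a + b) := by
    rw [← hfac]; exact_mod_cast hPdvd
  have hPprimeZ : Prime (P : ℤ) := Nat.prime_iff_prime_int.mp hP
  have hPle : (P : ℤ) ≤ 2 * a + b := by
    rcases hPprimeZ.dvd_mul.mp hPdvdZ with h | h
    · have := Int.le_of_dvd hdiff_pos h
      linarith
    · exact Int.le_of_dvd hsum_pos h
  -- (2a+b)^2 ≤ 4n since 5b ≤ 6a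
  have hsq : (2 * a + b) ^ 2 ≤ 4 * (n : ℤ) := by
    rw [heq]; nlinarith
  have hP2 : (P : ℤ) ^ 2 ≤ 4 * (n : ℤ) := by
    nlinarith
  -- but P > 2√n gives P^2 > 4n
  have hsqrt : (2 * Real.sqrt n) ^ 2 = 4 * n := by
    rw [mul_pow, Real.sq_sqrt (by positivity : (0:ℝ) ≤ (n:ℝ))]
    ring
  have hPpos : (0:ℝ) ≤ 2 * Real.sqrt n := by positivity
  have : (4 : ℝ) * n < (P : ℝ) ^ 2 := by
    rw [← hsqrt]
    exact pow_lt_pow_left₀ hPbig hPpos (by norm_num)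
  have : (4 : ℝ) * n < (4 : ℝ) * n := lt_of_lt_of_le this (by exact_mod_cast hP2)
  linarith
end

section
/- Let X be a real number with X ≥ 9.8·10^18, and set B = 8.12·X^{3/2}·(log X)⁶·log log X and A₁ = exp(1.69·log X·log log X). Then 5·10⁸ · 8⁴ · (1 + log A₁) · (5 + (log B)/2 + log(64 + 32·log A₁))² ≤ 1.2·10^16 · (log X)³ · log log X. -/
open Real

/-- **Numerical evaluation of the Waldschmidt–Mignotte lower bound.** For
`X ≥ 9.8·10^18`, with `B = 8.12·X^{3/2}·(log X)⁶·log log X` and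
`A₁ = exp(1.69·log X·log log X)`, one has
`5·10⁸·8⁴·(1 + log A₁)·(5 + (log B)/2 + log(64 + 32·log A₁))² ≤
  1.2·10^16·(log X)³·log log X`. -/
theorem waldschmidt_bound_evaluation (X : ℝ) (hX : X ≥ 9.8e18) :
    5e8 * 8 ^ 4 *
        (1 + Real.log (Real.exp (1.69 * Real.log X * Real.log (Real.log X)))) *
        (5 + Real.log (8.12 * X ^ ((3 : ℝ) / 2) * (Real.log X) ^ 6 *
            Real.log (Real.log X)) / 2 +
          Real.log (64 + 32 *
            Real.log (Real.exp (1.69 * Real.log X * Real.log (Real.log X))))) ^ 2 ≤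
      1.2e16 * (Real.log X) ^ 3 * Real.log (Real.log X) := by
  have hX0 : (0:ℝ) < X := by linarith
  set L := Real.log X with hLdef
  have hL43 : (43:ℝ) ≤ L := by
    rw [hLdef, Real.le_log_iff_exp_le hX0]
    have h1 : Real.exp 43 ≤ 2.7182818286 ^ (43:ℕ) := by
      calc Real.exp 43 = Real.exp 1 ^ (43:ℕ) := by
            rw [← Real.exp_nat_mul]; norm_num
        _ ≤ 2.7182818286 ^ (43:ℕ) :=
            pow_le_pow_left₀ (Real.exp_pos 1).le Real.exp_one_lt_d9.le 43
    have h2 : (2.7182818286:ℝ) ^ (43:ℕ) ≤ 9.8e18 := by norm_num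
    linarith
  have hL0 : (0:ℝ) < L := by linarith
  set M := Real.log L with hMdef
  have hM3 : (3:ℝ) ≤ M := by
    rw [hMdef, Real.le_log_iff_exp_le hL0]
    have h1 : Real.exp 3 ≤ 2.7182818286 ^ (3:ℕ) := by
      calc Real.exp 3 = Real.exp 1 ^ (3:ℕ) := by
            rw [← Real.exp_nat_mul]; norm_num
        _ ≤ 2.7182818286 ^ (3:ℕ) :=
            pow_le_pow_left₀ (Real.exp_pos 1).le Real.exp_one_lt_d9.le 3
    have h2 : (2.7182818286:ℝ) ^ (3:ℕ) ≤ 43 := by norm_num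
    linarith
  have hM0 : (0:ℝ) < M := by linarith
  have hML : M ≤ L := by
    have := Real.log_le_sub_one_of_pos hL0
    rw [← hMdef] at this; linarith
  -- simplify log ∘ exp
  rw [Real.log_exp]
  -- expand log of the product B
  have hB : Real.log (8.12 * X ^ ((3:ℝ)/2) * L ^ 6 * M)
      = Real.log 8.12 + (3/2) * L + 6 * M + Real.log M := by
    rw [Real.log_mul (by positivity) (ne_of_gt hM0),
        Real.log_mul (by positivity) (by positivity),
        Real.log_mul (by norm_num) (by positivity),
        Real.log_rpow hX0, Real.log_pow, ← hLdef, ← hMdef]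
    push_cast; ring
  rw [hB]
  -- bounds on the individual log terms
  have h812 : Real.log 8.12 ≤ 7.12 := by
    have := Real.log_le_sub_one_of_pos (show (0:ℝ) < 8.12 by norm_num); linarith
  have h812' : (0:ℝ) ≤ Real.log 8.12 := Real.log_nonneg (by norm_num)
  have hlogM : Real.log M ≤ M := by
    have := Real.log_le_sub_one_of_pos hM0; linarith
  have hlogM' : (0:ℝ) ≤ Real.log M := Real.log_nonneg (by linarith)
  have hbig : Real.log (64 + 32 * (1.69 * L * M)) ≤ 59 + 2 * M := by
    have h1 : (64:ℝ) + 32 * (1.69 * L * M) ≤ 60 * L ^ 2 := by nlinarith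
    have h2 : Real.log (64 + 32 * (1.69 * L * M)) ≤ Real.log (60 * L ^ 2) := by
      apply Real.log_le_log (by nlinarith) h1
    have h3 : Real.log (60 * L ^ 2) = Real.log 60 + 2 * M := by
      rw [Real.log_mul (by norm_num) (by positivity), Real.log_pow, ← hMdef]
      push_cast; ring
    have h4 : Real.log 60 ≤ 59 := by
      have := Real.log_le_sub_one_of_pos (show (0:ℝ) < 60 by norm_num); linarith
    linarith
  have hbig' : (0:ℝ) ≤ Real.log (64 + 32 * (1.69 * L * M)) := by
    apply Real.log_nonneg; nlinarith
  set S := 5 + (Real.log 8.12 + (3/2) * L + 6 * M + Real.log M) / 2 +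
      Real.log (64 + 32 * (1.69 * L * M)) with hSdef
  have hS0 : (0:ℝ) ≤ S := by rw [hSdef]; positivity
  have hS : S ≤ 8 * L := by rw [hSdef]; linarith
  have hS2 : S ^ 2 ≤ 64 * L ^ 2 := by nlinarith
  have h1 : 1 + 1.69 * L * M ≤ 1.7 * L * M := by nlinarith
  have key : 5e8 * 8 ^ 4 * (1 + 1.69 * L * M) * S ^ 2
      ≤ 5e8 * 8 ^ 4 * (1.7 * L * M) * (64 * L ^ 2) := by
    apply mul_le_mul _ hS2 (sq_nonneg S)
    · linarith [h1]
    · have hLM : (0:ℝ) ≤ L * M := mul_nonneg hL0.le hM0.le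
      linarith [hLM]
  calc 5e8 * 8 ^ 4 * (1 + 1.69 * L * M) * S ^ 2
      ≤ 5e8 * 8 ^ 4 * (1.7 * L * M) * (64 * L ^ 2) := key
    _ ≤ 1.2e16 * L ^ 3 * M := by
        have h : (0:ℝ) ≤ L ^ 3 * M := by positivity
        have : 5e8 * 8 ^ 4 * (1.7 * L * M) * (64 * L ^ 2) = 2.228224e14 * (L ^ 3 * M) := by ring
        rw [this]
        have : 1.2e16 * L ^ 3 * M = 1.2e16 * (L ^ 3 * M) := by ring
        rw [this]
        linarith [h]
end
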